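/- arXiv:1606.01327 — 2 statements merged into one kernel-verified Lean document; each statement's English description precedes it below -/
import Mathlib

section
/- Suppose S₁x = Px + q with P a self-adjoint nonexpansive linear operator on ℝⁿ and q ∈ ℝⁿ, S₂ = ∇f₂ for a differentiable function f₂: ℝⁿ → ℝ, and S₂ is α-averaged and β-negatively averaged with α, β ∈ (0,1]. Let δ_α = 2α - 1 and δ_β = 2β - 1, and define F(x) = ½⟨Px, x⟩ - f₂(Px + q). Then for all x, y ∈ ℝⁿ: ½⟨(P - δ_β P²)(x-y), x-y⟩ ≤ F(x) - F(y) - ⟨∇F(y), x-y⟩ ≤ ½⟨(P + δ_α P²)(x-y), x-y⟩. -/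
open scoped RealInnerProductSpace

/-- A mapping is nonexpansive if it is 1-Lipschitz. -/
def Nonexpansive {n : ℕ} (T : EuclideanSpace ℝ (Fin n) → EuclideanSpace ℝ (Fin n)) : Prop :=
  ∀ x y, ‖T x - T y‖ ≤ ‖x - y‖

/-- `T` is `α`-averaged: `T = (1-α)Id + αS` for some nonexpansive `S`. -/
def Averaged {n : ℕ} (T : EuclideanSpace ℝ (Fin n) → EuclideanSpace ℝ (Fin n)) (α : ℝ) : Prop :=
  ∃ S, Nonexpansive S ∧ ∀ x, T x = (1 - α) • x + α • S x

/-! With `u = P y + q` and `d = x - y`, self-adjointness of `P` turns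
`F x - F y - ⟪∇F y, d⟫` into `½⟪P d, d⟫ - D(u + P d, u)`, where
`D(v, u) = f₂ v - f₂ u - ⟪S₂ u, v - u⟫` is the Bregman distance of `f₂`, and `⟪P² d, d⟫ = ‖P d‖²`.
An `α`-averaged map `T` satisfies `⟪T a - T b, a - b⟫ ≥ (1 - 2α)‖a - b‖²`. Applied to `S₂` and to
`-S₂ = ∇(-f₂)` and integrated along the segment from `u` to `u + P d`, this traps `D(u + P d, u)`
between `(1 - 2α)/2 ‖P d‖²` and `(2β - 1)/2 ‖P d‖²`. -/

section

variable {E : Type*} [NormedAddCommGroup E] [InnerProductSpace ℝ E] [CompleteSpace E]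
  {f : E → ℝ} {g : E → E}

theorem HasGradientAt.neg {x : E} {g' : E} (h : HasGradientAt f g' x) :
    HasGradientAt (fun y => -f y) (-g') x := by
  rw [hasGradientAt_iff_hasFDerivAt, map_neg]
  exact h.hasFDerivAt.neg

theorem HasGradientAt.hasDerivAt_comp_add_smul {u d : E} {t : ℝ} {g' : E}
    (h : HasGradientAt f g' (u + t • d)) :
    HasDerivAt (fun s : ℝ => f (u + s • d)) ⟪g', d⟫ t := by
  simpa [Function.comp_def] using
    h.hasFDerivAt.comp_hasDerivAt t (((hasDerivAt_id t).smul_const d).const_add u)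

theorem mul_norm_sq_le_bregman (hf : ∀ x, HasGradientAt f (g x) x) {c : ℝ}
    (hg : ∀ a b, c * ‖a - b‖ ^ 2 ≤ ⟪g a - g b, a - b⟫) (u d : E) :
    c / 2 * ‖d‖ ^ 2 ≤ f (u + d) - f u - ⟪g u, d⟫ := by
  set φ : ℝ → ℝ := fun t => f (u + t • d) - t * ⟪g u, d⟫ - c / 2 * t ^ 2 * ‖d‖ ^ 2
  have hφ : ∀ t, HasDerivAt φ (⟪g (u + t • d), d⟫ - ⟪g u, d⟫ - c * t * ‖d‖ ^ 2) t := fun t => by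
    refine ((((hf _).hasDerivAt_comp_add_smul (u := u) (d := d)).sub
      ((hasDerivAt_id t).mul_const ⟪g u, d⟫)).sub
      (((hasDerivAt_pow 2 t).const_mul (c / 2)).mul_const (‖d‖ ^ 2))).congr_deriv ?_
    simp only [one_mul, Nat.cast_ofNat]
    ring
  have hφ'_nonneg : ∀ t ∈ interior (Set.Icc (0 : ℝ) 1),
      0 ≤ ⟪g (u + t • d), d⟫ - ⟪g u, d⟫ - c * t * ‖d‖ ^ 2 := by
    intro t ht
    rw [interior_Icc] at ht
    have key := hg (u + t • d) u
    rw [add_sub_cancel_left, inner_smul_right, norm_smul, Real.norm_of_nonneg ht.1.le,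
      inner_sub_left] at key
    nlinarith [ht.1]
  have hmono : MonotoneOn φ (Set.Icc 0 1) :=
    monotoneOn_of_hasDerivWithinAt_nonneg (convex_Icc 0 1)
      (fun t _ => (hφ t).continuousAt.continuousWithinAt)
      (fun t _ => (hφ t).hasDerivWithinAt) hφ'_nonneg
  have h01 : φ 0 ≤ φ 1 := hmono (by simp) (by simp) zero_le_one
  simp only [φ, zero_smul, one_smul, add_zero, zero_mul, one_mul, one_pow, mul_one, sub_zero,
    ne_eq, OfNat.ofNat_ne_zero, not_false_eq_true, zero_pow, mul_zero] at h01
  linarith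

end

theorem Averaged.mul_norm_sq_le_inner_sub {n : ℕ}
    {T : EuclideanSpace ℝ (Fin n) → EuclideanSpace ℝ (Fin n)} {α : ℝ} (h : Averaged T α) (hα : 0 ≤ α)
    (a b : EuclideanSpace ℝ (Fin n)) :
    (1 - 2 * α) * ‖a - b‖ ^ 2 ≤ ⟪T a - T b, a - b⟫ := by
  obtain ⟨R, hR, hT⟩ := h
  have hRab : -‖a - b‖ ^ 2 ≤ ⟪R a - R b, a - b⟫ := calc
    -‖a - b‖ ^ 2 ≤ -(‖R a - R b‖ * ‖a - b‖) := by
      rw [sq]; exact neg_le_neg (mul_le_mul_of_nonneg_right (hR a b) (norm_nonneg _))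
    _ ≤ ⟪R a - R b, a - b⟫ := neg_le_of_abs_le (abs_real_inner_le_norm _ _)
  have hTab : ⟪T a - T b, a - b⟫ = (1 - α) * ‖a - b‖ ^ 2 + α * ⟪R a - R b, a - b⟫ := by
    rw [hT a, hT b, ← real_inner_self_eq_norm_sq, ← real_inner_smul_left, ← real_inner_smul_left,
      ← inner_add_left]
    congr 1
    module
  rw [hTab]
  linarith [mul_le_mul_of_nonneg_left hRab hα]

theorem envelope_sub_sub_inner_eq {E : Type*} [NormedAddCommGroup E] [InnerProductSpace ℝ E]
    {P : E →L[ℝ] E} (hP : ∀ x y, ⟪P x, y⟫ = ⟪x, P y⟫) (q : E) (f : E → ℝ) (g : E → E)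
    (x y : E) :
    (1 / 2 * ⟪P x, x⟫ - f (P x + q)) - (1 / 2 * ⟪P y, y⟫ - f (P y + q)) -
        ⟪P (y - g (P y + q)), x - y⟫ =
      1 / 2 * ⟪P (x - y), x - y⟫ -
        (f (P y + q + P (x - y)) - f (P y + q) - ⟪g (P y + q), P (x - y)⟫) := by
  obtain ⟨d, rfl⟩ : ∃ d, x = y + d := ⟨x - y, by abel⟩
  have hyd : ⟪P d, y⟫ = ⟪P y, d⟫ := by rw [hP, real_inner_comm]
  rw [add_sub_cancel_left, map_add, add_right_comm, map_sub, inner_sub_left, hP (g _) d]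
  simp only [inner_add_left, inner_add_right, hyd]
  ring

theorem stmt6_general {n : ℕ}
    (P : EuclideanSpace ℝ (Fin n) →L[ℝ] EuclideanSpace ℝ (Fin n))
    (hPsa : ∀ x y, ⟪P x, y⟫ = ⟪x, P y⟫)
    (q : EuclideanSpace ℝ (Fin n))
    (f₂ : EuclideanSpace ℝ (Fin n) → ℝ)
    (S₂ : EuclideanSpace ℝ (Fin n) → EuclideanSpace ℝ (Fin n))
    (hf₂ : ∀ x, HasGradientAt f₂ (S₂ x) x)
    (α β : ℝ) (hα0 : 0 < α) (hβ0 : 0 < β)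
    (havg : Averaged S₂ α) (hnavg : Averaged (fun x => -S₂ x) β)
    (F : EuclideanSpace ℝ (Fin n) → ℝ)
    (hF : ∀ x, F x = 1/2 * ⟪P x, x⟫ - f₂ (P x + q)) :
    ∀ x y,
      1/2 * ⟪(P - (2*β - 1) • (P.comp P)) (x - y), x - y⟫ ≤
        F x - F y - ⟪P (y - S₂ (P y + q)), x - y⟫ ∧
      F x - F y - ⟪P (y - S₂ (P y + q)), x - y⟫ ≤
        1/2 * ⟪(P + (2*α - 1) • (P.comp P)) (x - y), x - y⟫ := by
  intro x y
  have hupper := mul_norm_sq_le_bregman hf₂ (havg.mul_norm_sq_le_inner_sub hα0.le)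
    (P y + q) (P (x - y))
  have hlower := mul_norm_sq_le_bregman (fun z => (hf₂ z).neg)
    (hnavg.mul_norm_sq_le_inner_sub hβ0.le) (P y + q) (P (x - y))
  have hPP : ⟪(P.comp P) (x - y), x - y⟫ = ‖P (x - y)‖ ^ 2 := by
    rw [P.comp_apply, hPsa, real_inner_self_eq_norm_sq]
  rw [inner_neg_left] at hlower
  rw [hF, hF, envelope_sub_sub_inner_eq hPsa]
  simp only [sub_apply, add_apply, smul_apply, inner_sub_left, inner_add_left, real_inner_smul_left, hPP]
  constructor <;> linarith

theorem stmt6 {n : ℕ}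
    (P : EuclideanSpace ℝ (Fin n) →L[ℝ] EuclideanSpace ℝ (Fin n))
    (hPsa : ∀ x y, ⟪P x, y⟫ = ⟪x, P y⟫) (hPne : ∀ x, ‖P x‖ ≤ ‖x‖)
    (q : EuclideanSpace ℝ (Fin n))
    (f₂ : EuclideanSpace ℝ (Fin n) → ℝ)
    (S₂ : EuclideanSpace ℝ (Fin n) → EuclideanSpace ℝ (Fin n))
    (hf₂ : ∀ x, HasGradientAt f₂ (S₂ x) x)
    (α β : ℝ) (hα0 : 0 < α) (hα1 : α ≤ 1) (hβ0 : 0 < β) (hβ1 : β ≤ 1)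
    (havg : Averaged S₂ α) (hnavg : Averaged (fun x => -S₂ x) β)
    (F : EuclideanSpace ℝ (Fin n) → ℝ)
    (hF : ∀ x, F x = 1/2 * ⟪P x, x⟫ - f₂ (P x + q)) :
    ∀ x y,
      1/2 * ⟪(P - (2*β - 1) • (P.comp P)) (x - y), x - y⟫ ≤
        F x - F y - ⟪P (y - S₂ (P y + q)), x - y⟫ ∧
      F x - F y - ⟪P (y - S₂ (P y + q)), x - y⟫ ≤
        1/2 * ⟪(P + (2*α - 1) • (P.comp P)) (x - y), x - y⟫ :=
  stmt6_general P hPsa q f₂ S₂ hf₂ α β hα0 hβ0 havg hnavg F hF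
end

section
/- Let f: ℝⁿ → ℝ be the quadratic f(x) = ½⟨Hx,x⟩ + ⟨h,x⟩ with H positive semidefinite, L = λ_max(H), m = λ_min(H) ≥ 0, and γ ∈ (0, 1/L). Let g: ℝⁿ → ℝ ∪ {∞} be proper closed convex and define the forward-backward envelope F(x) = γ⁻¹(⟨x - γ∇f(x), x⟩ - (½‖x‖² - γf(x)) - r*_{γg}(x - γ∇f(x))), where r_{γg}(x) = γg(x) + ½‖x‖². Then F is γ⁻¹(1-γm)-smooth and min((1-γm)m, (1-γL)L)-strongly convex with respect to the Euclidean norm. -/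
open scoped RealInnerProductSpace

/-- Fenchel conjugate of an extended-real-valued function. -/
noncomputable def econj {n : ℕ} (g : EuclideanSpace ℝ (Fin n) → EReal)
    (y : EuclideanSpace ℝ (Fin n)) : EReal :=
  ⨆ x, ((⟪y, x⟫ : ℝ) : EReal) - g x

/-- `g` is proper: somewhere finite and never `-∞`. -/
def EProper {n : ℕ} (g : EuclideanSpace ℝ (Fin n) → EReal) : Prop :=
  (∃ x, g x ≠ ⊤) ∧ ∀ x, g x ≠ ⊥

/-- Convexity for extended-real-valued functions. -/
def EConvex {n : ℕ} (g : EuclideanSpace ℝ (Fin n) → EReal) : Prop :=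
  ∀ x y : EuclideanSpace ℝ (Fin n), ∀ a b : ℝ, 0 ≤ a → 0 ≤ b → a + b = 1 →
    g (a • x + b • y) ≤ (a : EReal) * g x + (b : EReal) * g y

/-- `p` is the proximal point `prox_{γ g}(z)`, i.e. it minimizes
`g(·) + ‖· - z‖²/(2γ)`. -/
def IsProx {n : ℕ} (g : EuclideanSpace ℝ (Fin n) → EReal) (γ : ℝ)
    (z p : EuclideanSpace ℝ (Fin n)) : Prop :=
  ∀ y, g p + ((‖p - z‖^2 / (2*γ) : ℝ) : EReal) ≤ g y + ((‖y - z‖^2 / (2*γ) : ℝ) : EReal)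

/-- `r_{γg}(x) = γ g(x) + ½‖x‖²`. -/
noncomputable def rfun {n : ℕ} (g : EuclideanSpace ℝ (Fin n) → EReal) (γ : ℝ)
    (x : EuclideanSpace ℝ (Fin n)) : EReal :=
  (γ : EReal) * g x + ((‖x‖^2 / 2 : ℝ) : EReal)

/-!
Choose `P z` minimizing `g + ‖· - z‖² / (2γ)`; it exists because a proper closed convex `g` has an
affine minorant, so the quadratic term makes the objective coercive. Then
`r*_{γg}(z) = ⟪z, P z⟫ - r_{γg}(P z)`, and the quadratic growth of the prox objective around its
minimizer puts the Bregman divergence of `r*_{γg}` (with gradient `P`) between `0` and `½‖·‖²`.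
Since `x - γ∇f(x) = (I - γH)x - γh`, the Bregman divergence of `F` at `(x, z)` is
`γ⁻¹ (½⟪(I - γH)u, u⟫ - D_{r*})` with `u = x - z`, hence lies between
`½(⟪Hu, u⟫ - γ‖Hu‖²)` and `½γ⁻¹(1 - γm)‖u‖²`; the spectral bounds on `H` bound the former below by
`½ min((1 - γm)m, (1 - γL)L) ‖u‖²`. The two-sided quadratic bound yields the gradient, the lower
bound the strong convexity.
-/
open Filter Set

section InnerProductSpace

variable {E : Type*} [NormedAddCommGroup E] [InnerProductSpace ℝ E]

def bregman (f : E → ℝ) (f' : E → E) (x z : E) : ℝ :=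
  f x - f z - ⟪f' z, x - z⟫

theorem bregman_const_mul (a : ℝ) (f : E → ℝ) (f' : E → E) (x z : E) :
    bregman (fun x => a * f x) (fun z => a • f' z) x z = a * bregman f f' x z := by
  simp only [bregman, real_inner_smul_left]
  ring

theorem hasGradientAt_of_abs_bregman_le [CompleteSpace E] {f : E → ℝ} {f' : E → E} {K : ℝ}
    {z : E} (h : ∀ x, |bregman f f' x z| ≤ K * ‖x - z‖ ^ 2) : HasGradientAt f (f' z) z := by
  rw [hasGradientAt_iff_isLittleO]
  refine (Asymptotics.IsBigO.of_bound K (Eventually.of_forall fun x => ?_)).trans_isLittleO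
    (Asymptotics.isLittleO_pow_sub_sub z one_lt_two)
  simpa only [bregman, Real.norm_eq_abs, abs_pow, abs_norm] using h x

theorem convexOn_univ_of_le_add_inner {f : E → ℝ} {f' : E → E}
    (h : ∀ x z, f z + ⟪f' z, x - z⟫ ≤ f x) : ConvexOn ℝ univ f := by
  refine ⟨convex_univ, fun x _ y _ a b ha hb hab => ?_⟩
  set z := a • x + b • y
  have hcomb : a • (x - z) + b • (y - z) = 0 := by
    rw [show a • (x - z) + b • (y - z) = z - (a + b) • z by module, hab, one_smul, sub_self]
  have hsum : a * ⟪f' z, x - z⟫ + b * ⟪f' z, y - z⟫ = 0 := by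
    rw [← real_inner_smul_right, ← real_inner_smul_right, ← inner_add_right, hcomb,
      inner_zero_right]
  have hfz : f z = a * f z + b * f z := by rw [← add_mul, hab, one_mul]
  simp only [smul_eq_mul]
  nlinarith [mul_le_mul_of_nonneg_left (h x z) ha, mul_le_mul_of_nonneg_left (h y z) hb]

theorem convexOn_univ_sub_of_le_bregman {f : E → ℝ} {f' : E → E} {σ : ℝ}
    (h : ∀ x z, σ / 2 * ‖x - z‖ ^ 2 ≤ bregman f f' x z) :
    ConvexOn ℝ univ (fun x => f x - σ / 2 * ‖x‖ ^ 2) := by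
  refine convexOn_univ_of_le_add_inner (f' := fun z => f' z - σ • z) fun x z => ?_
  have hxz : ‖x - z‖ ^ 2 = ‖x‖ ^ 2 - 2 * ⟪z, x - z⟫ - ‖z‖ ^ 2 := by
    rw [norm_sub_sq_real, inner_sub_right, real_inner_self_eq_norm_sq, real_inner_comm]
    ring
  have := h x z
  rw [bregman, hxz] at this
  rw [inner_sub_left, real_inner_smul_left]
  linarith

theorem norm_map_sq_le_mul_inner {T : E →ₗ[ℝ] E} (hT : T.IsSymmetric) {c : ℝ}
    (h0 : ∀ x, 0 ≤ ⟪T x, x⟫) (hc : ∀ x, ⟪T x, x⟫ ≤ c * ‖x‖ ^ 2) (x : E) :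
    ‖T x‖ ^ 2 ≤ c * ⟪T x, x⟫ := by
  have hTTx : ⟪T (T x), x⟫ = ‖T x‖ ^ 2 := by rw [hT, real_inner_self_eq_norm_sq]
  -- Cauchy–Schwarz for the semi-inner product `⟪T ·, ·⟫`, via the discriminant.
  have hdisc := discrim_le_zero (K := ℝ) (a := ⟪T (T x), T x⟫) (b := 2 * ‖T x‖ ^ 2)
    (c := ⟪T x, x⟫) fun t => by
      have := h0 (x + t • T x)
      simp only [map_add, map_smul, inner_add_left, inner_add_right, real_inner_smul_left,
        real_inner_smul_right, hTTx, real_inner_self_eq_norm_sq] at this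
      nlinarith
  rw [discrim] at hdisc
  rcases (sq_nonneg ‖T x‖).eq_or_lt with hzero | hpos
  · rw [← hzero, norm_eq_zero.mp (pow_eq_zero_iff two_ne_zero |>.mp hzero.symm),
      inner_zero_left, mul_zero]
  · nlinarith [mul_le_mul_of_nonneg_right (hc (T x)) (h0 x)]

theorem inner_map_self_sub_mul_norm_sq_nonneg {T : E →ₗ[ℝ] E} (hT : T.IsSymmetric) {L γ : ℝ}
    (h0 : ∀ x, 0 ≤ ⟪T x, x⟫) (hL : ∀ x, ⟪T x, x⟫ ≤ L * ‖x‖ ^ 2) (hγ : 0 ≤ γ) (hγL : γ * L ≤ 1)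
    (x : E) : 0 ≤ ⟪T x, x⟫ - γ * ‖T x‖ ^ 2 := by
  nlinarith [mul_le_mul_of_nonneg_left (norm_map_sq_le_mul_inner hT h0 hL x) hγ, h0 x]

theorem min_mul_norm_sq_le_inner_map_self_sub_mul_norm_sq {T : E →ₗ[ℝ] E} (hT : T.IsSymmetric)
    {m L γ : ℝ} (hm : ∀ x, m * ‖x‖ ^ 2 ≤ ⟪T x, x⟫) (hL : ∀ x, ⟪T x, x⟫ ≤ L * ‖x‖ ^ 2)
    (hγ : 0 ≤ γ) (x : E) :
    min ((1 - γ * m) * m) ((1 - γ * L) * L) * ‖x‖ ^ 2 ≤ ⟪T x, x⟫ - γ * ‖T x‖ ^ 2 := by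
  -- Applied to `T - m`, the previous lemma gives `‖T x‖² ≤ (L + m)⟪T x, x⟫ - L m ‖x‖²`, so the
  -- right side is bounded below by a function affine in `⟪T x, x⟫ ∈ [m ‖x‖², L ‖x‖²]`.
  set S := T - m • LinearMap.id
  have hS : S.IsSymmetric := hT.sub (LinearMap.IsSymmetric.id.smul (by simp))
  have hSx : ∀ x, ⟪S x, x⟫ = ⟪T x, x⟫ - m * ‖x‖ ^ 2 := fun x => by
    simp [S, inner_sub_left, real_inner_smul_left]
  have hbound := norm_map_sq_le_mul_inner hS (c := L - m)
    (fun x => by rw [hSx]; linarith [hm x]) (fun x => by rw [hSx]; linarith [hL x]) x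
  have hSnorm : ‖S x‖ ^ 2 = ‖T x‖ ^ 2 - 2 * m * ⟪T x, x⟫ + m ^ 2 * ‖x‖ ^ 2 := by
    simp only [S, LinearMap.sub_apply, LinearMap.smul_apply, LinearMap.id_apply]
    rw [norm_sub_sq_real, real_inner_smul_right, norm_smul, mul_pow, Real.norm_eq_abs, sq_abs]
    ring
  rw [hSnorm, hSx] at hbound
  rcases le_total 0 (1 - γ * (L + m)) with hsign | hsign
  · nlinarith [mul_le_mul_of_nonneg_left (hm x) hsign, min_le_left ((1 - γ * m) * m)
      ((1 - γ * L) * L), sq_nonneg ‖x‖]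
  · nlinarith [mul_le_mul_of_nonneg_left (hL x) (neg_nonneg.mpr hsign), min_le_right
      ((1 - γ * m) * m) ((1 - γ * L) * L), sq_nonneg ‖x‖]

theorem bregman_nonneg_and_le_of_quadratic_growth {c : E → ℝ} {P : E → E}
    (hP : ∀ z y, ⟪z, P y⟫ - c (P y) + ‖P y - P z‖ ^ 2 / 2 ≤ ⟪z, P z⟫ - c (P z)) (s₁ s₂ : E) :
    0 ≤ bregman (fun z => ⟪z, P z⟫ - c (P z)) P s₁ s₂ ∧
      bregman (fun z => ⟪z, P z⟫ - c (P z)) P s₁ s₂ ≤ ‖s₁ - s₂‖ ^ 2 / 2 := by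
  have h₁ := hP s₁ s₂
  have h₂ := hP s₂ s₁
  have hsq := sq_nonneg ‖(s₁ - s₂) - (P s₁ - P s₂)‖
  rw [norm_sub_sq_real] at hsq
  simp only [bregman, inner_sub_left, inner_sub_right, real_inner_comm] at *
  constructor <;> nlinarith [norm_nonneg (P s₂ - P s₁), norm_nonneg (P s₁ - P s₂)]

theorem bregman_half_inner_sub_comp {A : E →ₗ[ℝ] E} (hA : A.IsSymmetric) (ρ : E → ℝ)
    (P : E → E) (b x z : E) :
    bregman (fun x => ⟪A x, x⟫ / 2 - ρ (A x + b)) (fun z => A (z - P (A z + b))) x z =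
      ⟪A (x - z), x - z⟫ / 2 - bregman ρ P (A x + b) (A z + b) := by
  simp only [bregman, add_sub_add_right_eq_sub, map_sub, inner_sub_left, inner_sub_right,
    hA z x, real_inner_comm]
  rw [hA x, hA z]
  ring

section ForwardBackwardEnvelope

variable {T : E →ₗ[ℝ] E} {ρ : E → ℝ} {P : E → E} {γ : ℝ} {h : E} {F : E → ℝ} {F' : E → E}

theorem bregman_forwardBackwardEnvelope_bounds (hT : T.IsSymmetric)
    (hρ : ∀ s₁ s₂, 0 ≤ bregman ρ P s₁ s₂ ∧ bregman ρ P s₁ s₂ ≤ ‖s₁ - s₂‖ ^ 2 / 2) (hγ : 0 < γ)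
    (hF : ∀ x, F x = γ⁻¹ * (⟪x - γ • (T x + h), x⟫ -
      (‖x‖ ^ 2 / 2 - γ * (⟪T x, x⟫ / 2 + ⟪h, x⟫)) - ρ (x - γ • (T x + h))))
    (hF' : ∀ z, F' z = γ⁻¹ • (z - P (z - γ • (T z + h)) - γ • T (z - P (z - γ • (T z + h)))))
    (x z : E) :
    (⟪T (x - z), x - z⟫ - γ * ‖T (x - z)‖ ^ 2) / 2 ≤ bregman F F' x z ∧
      bregman F F' x z ≤ γ⁻¹ * (‖x - z‖ ^ 2 - γ * ⟪T (x - z), x - z⟫) / 2 := by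
  set A : E →ₗ[ℝ] E := LinearMap.id - γ • T
  have hA : A.IsSymmetric := LinearMap.IsSymmetric.id.sub (hT.smul (by simp))
  have hAx : ∀ x, A x = x - γ • T x := fun _ => rfl
  have hY : ∀ x, x - γ • (T x + h) = A x + -(γ • h) := fun x => by rw [hAx]; module
  have hFA : ∀ x, F x = γ⁻¹ * (⟪A x, x⟫ / 2 - ρ (A x + -(γ • h))) := fun x => by
    rw [hF, hY, hAx x]
    simp only [inner_sub_left, inner_add_left, inner_neg_left, real_inner_smul_left,
      real_inner_self_eq_norm_sq]
    field_simp
    ring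
  have hF'A : ∀ z, F' z = γ⁻¹ • A (z - P (A z + -(γ • h))) := fun z => by
    rw [hF', hY, hAx (z - P (A z + -(γ • h)))]
  obtain ⟨hρ₀, hρ₁⟩ := hρ (A x + -(γ • h)) (A z + -(γ • h))
  rw [add_sub_add_right_eq_sub, ← map_sub] at hρ₁
  rw [funext hFA, funext hF'A, bregman_const_mul, bregman_half_inner_sub_comp hA]
  set u := x - z
  have hAu : ⟪A u, u⟫ = ‖u‖ ^ 2 - γ * ⟪T u, u⟫ := by
    rw [hAx, inner_sub_left, real_inner_smul_left, real_inner_self_eq_norm_sq]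
  have hAu_sq : ‖A u‖ ^ 2 = ‖u‖ ^ 2 - 2 * γ * ⟪T u, u⟫ + γ ^ 2 * ‖T u‖ ^ 2 := by
    rw [hAx, norm_sub_sq_real, real_inner_smul_right, norm_smul, mul_pow, Real.norm_eq_abs,
      sq_abs, real_inner_comm]
    ring
  rw [hAu_sq] at hρ₁
  rw [hAu]
  have hγinv : 0 ≤ γ⁻¹ := inv_nonneg.mpr hγ.le
  constructor
  · calc (⟪T u, u⟫ - γ * ‖T u‖ ^ 2) / 2 = γ⁻¹ * (γ * (⟪T u, u⟫ - γ * ‖T u‖ ^ 2) / 2) := by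
          field_simp
      _ ≤ _ := mul_le_mul_of_nonneg_left (by linarith) hγinv
  · calc _ ≤ γ⁻¹ * ((‖u‖ ^ 2 - γ * ⟪T u, u⟫) / 2) := mul_le_mul_of_nonneg_left (by linarith) hγinv
      _ = _ := by ring

theorem bregman_forwardBackwardEnvelope_bounds_of_spectral (hT : T.IsSymmetric)
    (hρ : ∀ s₁ s₂, 0 ≤ bregman ρ P s₁ s₂ ∧ bregman ρ P s₁ s₂ ≤ ‖s₁ - s₂‖ ^ 2 / 2)
    {m L : ℝ} (hm₀ : 0 ≤ m) (hm : ∀ x, m * ‖x‖ ^ 2 ≤ ⟪T x, x⟫)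
    (hL : ∀ x, ⟪T x, x⟫ ≤ L * ‖x‖ ^ 2) (hγ : 0 < γ) (hγL : γ * L < 1)
    (hF : ∀ x, F x = γ⁻¹ * (⟪x - γ • (T x + h), x⟫ -
      (‖x‖ ^ 2 / 2 - γ * (⟪T x, x⟫ / 2 + ⟪h, x⟫)) - ρ (x - γ • (T x + h))))
    (hF' : ∀ z, F' z = γ⁻¹ • (z - P (z - γ • (T z + h)) - γ • T (z - P (z - γ • (T z + h)))))
    (x z : E) :
    0 ≤ bregman F F' x z ∧
      min ((1 - γ * m) * m) ((1 - γ * L) * L) / 2 * ‖x - z‖ ^ 2 ≤ bregman F F' x z ∧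
      bregman F F' x z ≤ γ⁻¹ * (1 - γ * m) / 2 * ‖x - z‖ ^ 2 := by
  obtain ⟨hlow, hup⟩ := bregman_forwardBackwardEnvelope_bounds hT hρ hγ hF hF' x z
  have h₀ : ∀ x, 0 ≤ ⟪T x, x⟫ := fun x => (mul_nonneg hm₀ (sq_nonneg _)).trans (hm x)
  have hnonneg := inner_map_self_sub_mul_norm_sq_nonneg hT h₀ hL hγ.le hγL.le (x - z)
  have hσ := min_mul_norm_sq_le_inner_map_self_sub_mul_norm_sq hT hm hL hγ.le (x - z)
  have hγm : γ * (m * ‖x - z‖ ^ 2) ≤ γ * ⟪T (x - z), x - z⟫ :=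
    mul_le_mul_of_nonneg_left (hm _) hγ.le
  refine ⟨by linarith, by linarith, hup.trans ?_⟩
  calc γ⁻¹ * (‖x - z‖ ^ 2 - γ * ⟪T (x - z), x - z⟫) / 2
      ≤ γ⁻¹ * (‖x - z‖ ^ 2 - γ * (m * ‖x - z‖ ^ 2)) / 2 := by
        gcongr
    _ = γ⁻¹ * (1 - γ * m) / 2 * ‖x - z‖ ^ 2 := by ring

end ForwardBackwardEnvelope

end InnerProductSpace

theorem LowerSemicontinuous.exists_forall_le' {α β : Type*} [TopologicalSpace α] [LinearOrder β]
    {f : α → β} (hf : LowerSemicontinuous f) (x₀ : α) (h : ∀ᶠ x in cocompact α, f x₀ ≤ f x) :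
    ∃ p, ∀ x, f p ≤ f x := by
  obtain ⟨t, ht, hts⟩ := mem_cocompact.mp h
  obtain ⟨p, -, hp⟩ :=
    (hf.lowerSemicontinuousOn _).exists_isMinOn (insert_nonempty x₀ t) (ht.insert x₀)
  refine ⟨p, fun x => ?_⟩
  by_cases hx : x ∈ t
  · exact hp (mem_insert_of_mem x₀ hx)
  · exact (hp (mem_insert x₀ t)).trans (hts hx)

section Prox

variable {n : ℕ} {g : EuclideanSpace ℝ (Fin n) → EReal}

theorem EConvex.le_coe_toReal (hgc : EConvex g) (hbot : ∀ x, g x ≠ ⊥)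
    {x y : EuclideanSpace ℝ (Fin n)} (hx : g x ≠ ⊤) (hy : g y ≠ ⊤) {a b : ℝ} (ha : 0 ≤ a)
    (hb : 0 ≤ b) (hab : a + b = 1) :
    g (a • x + b • y) ≤ ((a * (g x).toReal + b * (g y).toReal : ℝ) : EReal) := by
  have := hgc x y a b ha hb hab
  rwa [← EReal.coe_toReal hx (hbot x), ← EReal.coe_toReal hy (hbot y), ← EReal.coe_mul,
    ← EReal.coe_mul, ← EReal.coe_add] at this

theorem exists_affine_minorant (hgp : EProper g) (hglsc : LowerSemicontinuous g)
    (hgc : EConvex g) :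
    ∃ (v : EuclideanSpace ℝ (Fin n)) (c : ℝ), ∀ x, ((⟪v, x⟫ + c : ℝ) : EReal) ≤ g x := by
  obtain ⟨x₀, hx₀⟩ := hgp.1
  set S : Set (EuclideanSpace ℝ (Fin n) × ℝ) := {p | g p.1 ≤ p.2}
  have htoReal : ∀ {x : EuclideanSpace ℝ (Fin n)} {s : ℝ}, g x ≤ s → (g x).toReal ≤ s :=
    fun {x s} hx => by simpa using EReal.toReal_le_toReal hx (hgp.2 x) (EReal.coe_ne_top s)
  have hSconv : Convex ℝ S := by
    rintro ⟨x, s⟩ hx ⟨y, t⟩ hy a b ha hb hab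
    refine (hgc.le_coe_toReal hgp.2 (ne_top_of_le_ne_top (EReal.coe_ne_top s) hx)
      (ne_top_of_le_ne_top (EReal.coe_ne_top t) hy) ha hb hab).trans (EReal.coe_le_coe_iff.mpr ?_)
    have := htoReal hx
    have := htoReal hy
    simp only [Prod.smul_mk, Prod.mk_add_mk, smul_eq_mul]
    nlinarith
  have hSclosed : IsClosed S := hglsc.isClosed_epigraph.preimage
    (continuous_fst.prodMk (continuous_coe_real_ereal.comp continuous_snd))
  have hq : (x₀, (g x₀).toReal - 1) ∉ S := fun hle => by linarith [htoReal hle]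
  obtain ⟨f, u, hfq, hfS⟩ := geometric_hahn_banach_point_closed hSconv hSclosed hq
  set w := (InnerProductSpace.toDual ℝ _).symm (f.comp (.inl ℝ _ ℝ))
  have hf : ∀ x t, f (x, t) = ⟪w, x⟫ + t * f (0, 1) := fun x t => by
    rw [show ((x, t) : EuclideanSpace ℝ (Fin n) × ℝ) = (x, 0) + t • (0, 1) by simp, map_add,
      map_smul, smul_eq_mul]
    simp [w, InnerProductSpace.toDual_symm_apply]
  have hu : ∀ x (t : ℝ), g x ≤ t → u < ⟪w, x⟫ + t * f (0, 1) := fun x t hxt => hf x t ▸ hfS _ hxt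
  have hβ : 0 < f (0, 1) := by
    have := hu x₀ _ (EReal.coe_toReal hx₀ (hgp.2 x₀)).ge
    rw [hf] at hfq
    linarith
  refine ⟨(-(f (0, 1))⁻¹) • w, u / f (0, 1), fun x => ?_⟩
  by_cases hx : g x = ⊤
  · simp [hx]
  rw [← EReal.coe_toReal hx (hgp.2 x), EReal.coe_le_coe_iff]
  have := hu x _ (EReal.coe_toReal hx (hgp.2 x)).ge
  calc ⟪(-(f (0, 1))⁻¹) • w, x⟫ + u / f (0, 1) = (u - ⟪w, x⟫) / f (0, 1) := by
        rw [real_inner_smul_left]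
        field_simp
        ring
    _ ≤ (g x).toReal := (div_le_iff₀ hβ).mpr (by linarith)

theorem exists_isProx {γ : ℝ} (hγ : 0 < γ) (hgp : EProper g) (hglsc : LowerSemicontinuous g)
    (hgc : EConvex g) (z : EuclideanSpace ℝ (Fin n)) : ∃ p, IsProx g γ z p ∧ g p ≠ ⊤ := by
  obtain ⟨v, c, hvc⟩ := exists_affine_minorant hgp hglsc hgc
  obtain ⟨x₀, hx₀⟩ := hgp.1
  set q : EuclideanSpace ℝ (Fin n) → ℝ := fun w => ‖w - z‖ ^ 2 / (2 * γ)
  set Φ : EuclideanSpace ℝ (Fin n) → EReal := fun w => g w + q w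
  have hΦ : LowerSemicontinuous Φ :=
    hglsc.add' (continuous_coe_real_ereal.comp (by fun_prop)).lowerSemicontinuous fun _ =>
      EReal.continuousAt_add (Or.inr (EReal.coe_ne_bot _)) (Or.inr (EReal.coe_ne_top _))
  have hΦx₀ : Φ x₀ = ((g x₀).toReal + q x₀ : ℝ) := by
    rw [EReal.coe_add, EReal.coe_toReal hx₀ (hgp.2 x₀)]
  -- `g` grows at least affinely, so the quadratic term makes `Φ` coercive.
  have hcoercive : Tendsto (fun w => ⟪v, w⟫ + c + q w) (cocompact _) atTop := by
    have hk : Tendsto (fun d : ℝ => d * (d / (2 * γ) + -‖v‖) + (⟪v, z⟫ + c)) atTop atTop :=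
      tendsto_atTop_add_const_right _ _ (tendsto_id.atTop_mul_atTop₀
        (tendsto_atTop_add_const_right _ _ (tendsto_id.atTop_div_const (by positivity))))
    refine tendsto_atTop_mono (fun w => ?_) (hk.comp (tendsto_dist_right_cocompact_atTop z))
    have hvw : -(‖v‖ * ‖w - z‖) ≤ ⟪v, w - z⟫ := neg_le_of_abs_le (abs_real_inner_le_norm v _)
    rw [inner_sub_right] at hvw
    simp only [Function.comp_apply, dist_eq_norm, q]
    field_simp
    nlinarith
  have hev : ∀ᶠ w in cocompact _, Φ x₀ ≤ Φ w :=
    (hcoercive.eventually_ge_atTop _).mono fun w hw => hΦx₀ ▸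
      (EReal.coe_le_coe_iff.mpr hw).trans (by rw [EReal.coe_add]; exact add_le_add (hvc w) le_rfl)
  obtain ⟨p, hp⟩ := hΦ.exists_forall_le' x₀ hev
  refine ⟨p, hp, fun hpt => ?_⟩
  have := hp x₀
  rw [hΦx₀] at this
  simp only [Φ, hpt, EReal.top_add_coe, top_le_iff] at this
  exact EReal.coe_ne_top _ this

theorem IsProx.le_of_ne_top {γ : ℝ} (hγ : 0 < γ) (hbot : ∀ x, g x ≠ ⊥)
    {z p w : EuclideanSpace ℝ (Fin n)} (hp : IsProx g γ z p) (hpt : g p ≠ ⊤) (hwt : g w ≠ ⊤) :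
    γ * (g p).toReal + ‖p - z‖ ^ 2 / 2 ≤ γ * (g w).toReal + ‖w - z‖ ^ 2 / 2 := by
  have := hp w
  rw [← EReal.coe_toReal hpt (hbot p), ← EReal.coe_toReal hwt (hbot w), ← EReal.coe_add,
    ← EReal.coe_add, EReal.coe_le_coe_iff] at this
  have hscale : ∀ r a : ℝ, γ * (r + a / (2 * γ)) = γ * r + a / 2 := fun r a => by
    field_simp
  have := mul_le_mul_of_nonneg_left this hγ.le
  rwa [hscale, hscale] at this

theorem IsProx.add_norm_sq_le {γ : ℝ} (hγ : 0 < γ) (hbot : ∀ x, g x ≠ ⊥) (hgc : EConvex g)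
    {z p y : EuclideanSpace ℝ (Fin n)} (hp : IsProx g γ z p) (hpt : g p ≠ ⊤) (hyt : g y ≠ ⊤) :
    γ * (g p).toReal + ‖p - z‖ ^ 2 / 2 + ‖y - p‖ ^ 2 / 2 ≤ γ * (g y).toReal + ‖y - z‖ ^ 2 / 2 := by
  set D := ‖y - p‖ ^ 2 / 2 with hD
  set X := γ * (g p).toReal + ‖p - z‖ ^ 2 / 2 + D - γ * (g y).toReal - ‖y - z‖ ^ 2 / 2 with hX
  -- Comparing `p` with `(1 - t) • p + t • y` gives `X ≤ t D` for every `t ∈ (0, 1]`.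
  have hsegment : ∀ t : ℝ, 0 < t → t ≤ 1 → X ≤ t * D := fun t ht₀ ht₁ => by
    have hconv :=
      hgc.le_coe_toReal hbot hpt hyt (a := 1 - t) (b := t) (by linarith) ht₀.le (by ring)
    have hprox := hp.le_of_ne_top hγ hbot hpt (ne_top_of_le_ne_top (EReal.coe_ne_top _) hconv)
    have hconv' := EReal.toReal_le_toReal hconv (hbot _) (EReal.coe_ne_top _)
    rw [EReal.toReal_coe] at hconv'
    have hnorm : ‖(1 - t) • p + t • y - z‖ ^ 2 =
        (1 - t) * ‖p - z‖ ^ 2 + t * ‖y - z‖ ^ 2 - t * (1 - t) * ‖y - p‖ ^ 2 := by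
      rw [show (1 - t) • p + t • y - z = (1 - t) • (p - z) + t • (y - z) by module,
        show y - p = (y - z) - (p - z) by abel, norm_add_sq_real, norm_sub_sq_real (y - z),
        norm_smul, norm_smul, real_inner_smul_left, real_inner_smul_right, mul_pow, mul_pow,
        Real.norm_eq_abs, Real.norm_eq_abs, sq_abs, sq_abs, real_inner_comm (p - z)]
      ring
    rw [hnorm] at hprox
    refine le_of_mul_le_mul_left ?_ ht₀
    rw [hX, hD]
    nlinarith [mul_le_mul_of_nonneg_left hconv' hγ.le]
  have hX_nonpos : X ≤ 0 := by
    by_contra! hX_pos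
    have hD_nonneg : 0 ≤ D := by positivity
    have := hsegment (X / (X + D)) (by positivity) ((div_le_one (by positivity)).mpr (by linarith))
    rw [div_mul_eq_mul_div, le_div_iff₀ (by positivity)] at this
    nlinarith
  linarith

theorem IsProx.inner_sub_add_le {γ : ℝ} (hγ : 0 < γ) (hbot : ∀ x, g x ≠ ⊥) (hgc : EConvex g)
    {z p y : EuclideanSpace ℝ (Fin n)} (hp : IsProx g γ z p) (hpt : g p ≠ ⊤) (hyt : g y ≠ ⊤) :
    ⟪z, y⟫ - (γ * (g y).toReal + ‖y‖ ^ 2 / 2) + ‖y - p‖ ^ 2 / 2 ≤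
      ⟪z, p⟫ - (γ * (g p).toReal + ‖p‖ ^ 2 / 2) := by
  have := hp.add_norm_sq_le hγ hbot hgc hpt hyt
  linarith [norm_sub_sq_real p z, norm_sub_sq_real y z, real_inner_comm p z, real_inner_comm y z]

theorem econj_rfun_eq_of_isProx {γ : ℝ} (hγ : 0 < γ) (hbot : ∀ x, g x ≠ ⊥) (hgc : EConvex g)
    {z p : EuclideanSpace ℝ (Fin n)} (hp : IsProx g γ z p) (hpt : g p ≠ ⊤) :
    econj (rfun g γ) z = ((⟪z, p⟫ - (γ * (g p).toReal + ‖p‖ ^ 2 / 2) : ℝ) : EReal) := by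
  have hr : ∀ y, g y ≠ ⊤ → rfun g γ y = ((γ * (g y).toReal + ‖y‖ ^ 2 / 2 : ℝ) : EReal) :=
    fun y hy => by rw [rfun, EReal.coe_add, EReal.coe_mul, EReal.coe_toReal hy (hbot y)]
  apply le_antisymm
  · refine iSup_le fun y => ?_
    by_cases hy : g y = ⊤
    · rw [rfun, hy, EReal.coe_mul_top_of_pos hγ, EReal.top_add_coe, EReal.sub_top]
      exact bot_le
    · rw [hr y hy, ← EReal.coe_sub, EReal.coe_le_coe_iff]
      linarith [hp.inner_sub_add_le hγ hbot hgc hpt hy, sq_nonneg ‖y - p‖]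
  · exact le_iSup_of_le p (by rw [hr p hpt, ← EReal.coe_sub])

theorem bregman_econj_rfun_bounds {γ : ℝ} (hγ : 0 < γ) (hbot : ∀ x, g x ≠ ⊥) (hgc : EConvex g)
    {P : EuclideanSpace ℝ (Fin n) → EuclideanSpace ℝ (Fin n)} (hP : ∀ z, IsProx g γ z (P z))
    (hPtop : ∀ z, g (P z) ≠ ⊤) (s₁ s₂ : EuclideanSpace ℝ (Fin n)) :
    0 ≤ bregman (fun z => (econj (rfun g γ) z).toReal) P s₁ s₂ ∧
      bregman (fun z => (econj (rfun g γ) z).toReal) P s₁ s₂ ≤ ‖s₁ - s₂‖ ^ 2 / 2 := by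
  have hconj : (fun z => (econj (rfun g γ) z).toReal) =
      fun z => ⟪z, P z⟫ - (γ * (g (P z)).toReal + ‖P z‖ ^ 2 / 2) := funext fun z => by
    rw [econj_rfun_eq_of_isProx hγ hbot hgc (hP z) (hPtop z), EReal.toReal_coe]
  rw [hconj]
  exact bregman_nonneg_and_le_of_quadratic_growth (c := fun p => γ * (g p).toReal + ‖p‖ ^ 2 / 2)
    (fun z y => (hP z).inner_sub_add_le hγ hbot hgc (hPtop z) (hPtop y)) s₁ s₂

end Prox

theorem stmt19 {n : ℕ}
    (H : EuclideanSpace ℝ (Fin n) →L[ℝ] EuclideanSpace ℝ (Fin n))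
    (hHsa : ∀ x y, ⟪H x, y⟫ = ⟪x, H y⟫)
    (h : EuclideanSpace ℝ (Fin n))
    (m L : ℝ) (hm0 : 0 ≤ m)
    (hbounds : ∀ x, m * ‖x‖^2 ≤ ⟪H x, x⟫ ∧ ⟪H x, x⟫ ≤ L * ‖x‖^2)
    (γ : ℝ) (hγ0 : 0 < γ) (hγL : γ * L < 1)
    (g : EuclideanSpace ℝ (Fin n) → EReal)
    (hgp : EProper g) (hglsc : LowerSemicontinuous g) (hgc : EConvex g)
    (F : EuclideanSpace ℝ (Fin n) → ℝ)
    (hF : ∀ x, F x = γ⁻¹ * (⟪x - γ • (H x + h), x⟫ -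
        (‖x‖^2 / 2 - γ * (⟪H x, x⟫ / 2 + ⟪h, x⟫)) -
        (econj (rfun g γ) (x - γ • (H x + h))).toReal)) :
    (∃ F' : EuclideanSpace ℝ (Fin n) → EuclideanSpace ℝ (Fin n),
        (∀ x, HasGradientAt F (F' x) x) ∧
        ∀ x y, |F x - F y - ⟪F' y, x - y⟫| ≤ γ⁻¹ * (1 - γ * m) / 2 * ‖x - y‖^2) ∧
    ConvexOn ℝ Set.univ
      (fun x => F x - min ((1 - γ * m) * m) ((1 - γ * L) * L) / 2 * ‖x‖^2) := by
  choose P hP hPtop using exists_isProx hγ0 hgp hglsc hgc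
  have hH : (H : EuclideanSpace ℝ (Fin n) →ₗ[ℝ] _).IsSymmetric := hHsa
  set F' := fun z => γ⁻¹ • (z - P (z - γ • (H z + h)) - γ • H (z - P (z - γ • (H z + h))))
  have hD := bregman_forwardBackwardEnvelope_bounds_of_spectral hH
    (bregman_econj_rfun_bounds hγ0 hgp.2 hgc hP hPtop) hm0 (fun x => (hbounds x).1)
    (fun x => (hbounds x).2) hγ0 hγL hF (F' := F') fun _ => rfl
  have habs : ∀ x z, |bregman F F' x z| ≤ γ⁻¹ * (1 - γ * m) / 2 * ‖x - z‖ ^ 2 := fun x z =>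
    abs_le.mpr ⟨by linarith [hD x z], (hD x z).2.2⟩
  exact ⟨⟨F', fun z => hasGradientAt_of_abs_bregman_le (habs · z), habs⟩,
    convexOn_univ_sub_of_le_bregman fun x z => (hD x z).2.1⟩
end
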